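/- For every extended limit γ on ℓ∞, the Banach limit B defined by Bx = log(2) · γ( n ↦ (1/n) Σ_{k=0}^∞ x_{k+1} 2^{−k/n} ) satisfies liminf_{k→∞} (Cx)_k ≤ Bx ≤ limsup_{k→∞} (Cx)_k for every x ∈ ℓ∞. -/

import Mathlib

open Filter BoundedContinuousFunction

noncomputable section

/-- `ℓ∞`: the space of bounded real sequences (indexed from `0`). -/
abbrev LInf : Type := BoundedContinuousFunction ℕ ℝ

/-- The translation (shift) operator `T(x₁,x₂,…) = (0,x₁,x₂,…)` (0-indexed). -/
def shift (x : LInf) : LInf :=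
  BoundedContinuousFunction.ofNormedAddCommGroup
    (fun n => if n = 0 then 0 else x (n - 1)) continuous_of_discreteTopology ‖x‖
    (by
      intro n
      rcases n with _ | n
      · simp [norm_nonneg x]
      · simpa using x.norm_coe_le_norm n)

/-- The Cesàro operator: the `n`-th entry (0-indexed) is the average of the first `n + 1`
entries, i.e. `(Cx)ₙ = (1/n) ∑_{k=1}^{n} x_k` in the 1-indexed notation. -/
def cesaro (x : LInf) : LInf :=
  BoundedContinuousFunction.ofNormedAddCommGroup
    (fun n => (↑(n + 1))⁻¹ * ∑ k ∈ Finset.range (n + 1), x k)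
    continuous_of_discreteTopology ‖x‖
    (by
      intro n
      have hn : (0:ℝ) < (n:ℝ) + 1 := by positivity
      have h1 : ‖∑ k ∈ Finset.range (n + 1), x k‖ ≤ ‖x‖ * ((n:ℝ) + 1) := by
        calc ‖∑ k ∈ Finset.range (n + 1), x k‖ ≤ ∑ k ∈ Finset.range (n + 1), ‖x‖ :=
              norm_sum_le_of_le _ (fun k _ => x.norm_coe_le_norm k)
          _ = ‖x‖ * ((n:ℝ) + 1) := by simp [mul_comm]
      rw [norm_mul, norm_inv]
      have h2 : ‖((n+1 : ℕ) : ℝ)‖ = (n:ℝ) + 1 := by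
        push_cast
        rw [Real.norm_eq_abs, abs_of_pos hn]
      rw [h2, inv_mul_le_iff₀ hn]
      exact h1.trans_eq (mul_comm _ _))

/-- A Banach limit: a positive, normalised, shift-invariant continuous linear
functional on `ℓ∞`. -/
def IsBanachLimit (B : LInf →L[ℝ] ℝ) : Prop :=
  (∀ x : LInf, (∀ n, 0 ≤ x n) → 0 ≤ B x) ∧ B 1 = 1 ∧ ∀ x : LInf, B (shift x) = B x

/-- An extended limit: a positive continuous linear functional on `ℓ∞` which agrees with
the limit on every convergent sequence. -/
def IsExtendedLimit (γ : LInf →L[ℝ] ℝ) : Prop :=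
  (∀ x : LInf, (∀ n, 0 ≤ x n) → 0 ≤ γ x) ∧
    ∀ (x : LInf) (a : ℝ), Filter.Tendsto (fun n => x n) Filter.atTop (nhds a) → γ x = a

/-! With `a = log 2 / (n + 1)` and `r = e^{-a} = 2^{-1/(n+1)}`, Abel summation gives
`log 2 · (n + 1)⁻¹ ∑ₖ xₖ rᵏ = (a / (1 - r)) · (1 - r)² ∑ₘ (m + 1) (Cx)ₘ rᵐ`: a weighted average
of the Cesàro means, with weights summing to `1` and escaping to infinity as `r → 1`, times a
factor `a / (1 - r) ∈ [1, 1 + a]`. So if `(Cx)ₘ ≤ c` for `m ≥ N`, the sequence inside `γ` is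
at most `c + O(1/n)`, and a positive functional that agrees with `lim` is at most `c` on such a
sequence. The lower bound is the upper bound for `-x`. -/

open Finset Real Topology

lemma natCast_succ_mul_cesaro (y : LInf) (m : ℕ) :
    ((m : ℝ) + 1) * cesaro y m = ∑ k ∈ range (m + 1), y k := by
  change ((m : ℝ) + 1) * ((((m + 1 : ℕ) : ℝ))⁻¹ * _) = _
  rw [← mul_assoc, Nat.cast_succ, mul_inv_cancel₀ (by positivity), one_mul]

lemma abs_cesaro_le (y : LInf) (m : ℕ) : |cesaro y m| ≤ ‖y‖ :=
  ((cesaro y).norm_coe_le_norm m).trans (norm_ofNormedAddCommGroup_le _ (norm_nonneg y) _)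

lemma cesaro_neg (y : LInf) (m : ℕ) : cesaro (-y) m = -cesaro y m := by
  change (((m + 1 : ℕ) : ℝ))⁻¹ * ∑ k ∈ range (m + 1), (-y) k = -((((m + 1 : ℕ) : ℝ))⁻¹ * _)
  simp only [BoundedContinuousFunction.coe_neg, Pi.neg_apply, sum_neg_distrib, mul_neg]

lemma hasSum_sum_range_mul_pow {𝕜 : Type*} [NormedField 𝕜] [CompleteSpace 𝕜] {f : ℕ → 𝕜}
    {r : 𝕜} (hr : ‖r‖ < 1) (hf : Summable fun k => ‖f k * r ^ k‖) :
    HasSum (fun m => (∑ k ∈ range (m + 1), f k) * r ^ m) ((1 - r)⁻¹ * ∑' k, f k * r ^ k) := by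
  rw [← tsum_geometric_of_norm_lt_one hr, mul_comm]
  convert hasSum_sum_range_mul_of_summable_norm hf (summable_norm_geometric_of_norm_lt_one hr)
    using 1
  funext m
  rw [sum_mul]
  refine sum_congr rfl fun k hk => ?_
  rw [mul_assoc, ← pow_add, Nat.add_sub_cancel' (mem_range_succ_iff.1 hk)]

lemma summable_norm_mul_pow (y : LInf) {r : ℝ} (hr : ‖r‖ < 1) :
    Summable fun k => ‖y k * r ^ k‖ := by
  refine .of_nonneg_of_le (fun _ => norm_nonneg _) (fun k => ?_)
    ((summable_norm_geometric_of_norm_lt_one hr).mul_left ‖y‖)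
  rw [norm_mul]
  exact mul_le_mul_of_nonneg_right (y.norm_coe_le_norm k) (norm_nonneg _)

lemma hasSum_succ_mul_cesaro_sub_mul_pow (y : LInf) (L : ℝ) {r : ℝ} (hr : ‖r‖ < 1) :
    HasSum (fun m : ℕ => ((m : ℝ) + 1) * (cesaro y m - L) * r ^ m)
      ((1 - r)⁻¹ * ∑' k, y k * r ^ k - L / (1 - r) ^ 2) := by
  have hS := hasSum_sum_range_mul_pow hr (summable_norm_mul_pow y hr)
  have hW := (hasSum_choose_mul_geometric_of_norm_lt_one 1 hr).mul_left L
  rw [show L / (1 - r) ^ 2 = L * (1 / (1 - r) ^ (1 + 1)) by ring]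
  refine (hS.sub hW).congr_fun fun m => ?_
  rw [← natCast_succ_mul_cesaro]
  push_cast [Nat.choose_one_right]
  ring

lemma tsum_le_sum_range_of_nonpos {g : ℕ → ℝ} (hg : Summable g) {N : ℕ}
    (hN : ∀ m ≥ N, g m ≤ 0) : ∑' m, g m ≤ ∑ m ∈ range N, g m := by
  rw [← hg.sum_add_tsum_nat_add N]
  exact add_le_of_nonpos_right (tsum_nonpos fun m => hN _ (Nat.le_add_left N m))

lemma tsum_succ_mul_cesaro_sub_mul_pow_le (y : LInf) {L : ℝ} {N : ℕ}
    (hN : ∀ m ≥ N, cesaro y m ≤ L) {r : ℝ} (hr0 : 0 ≤ r) (hr1 : r < 1) :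
    ∑' m : ℕ, ((m : ℝ) + 1) * (cesaro y m - L) * r ^ m ≤
      ∑ m ∈ range N, ((m : ℝ) + 1) * |cesaro y m - L| := by
  have hT := hasSum_succ_mul_cesaro_sub_mul_pow y L (r := r)
    (by rw [Real.norm_of_nonneg hr0]; exact hr1)
  refine (tsum_le_sum_range_of_nonpos hT.summable fun m hm => ?_).trans
    (sum_le_sum fun m _ => ?_)
  · exact mul_nonpos_of_nonpos_of_nonneg
      (mul_nonpos_of_nonneg_of_nonpos (by positivity) (sub_nonpos.2 (hN m hm))) (by positivity)
  · rw [mul_assoc]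
    refine mul_le_mul_of_nonneg_left ?_ (by positivity)
    calc (cesaro y m - L) * r ^ m ≤ |cesaro y m - L| * r ^ m :=
          mul_le_mul_of_nonneg_right (le_abs_self _) (by positivity)
      _ ≤ |cesaro y m - L| := mul_le_of_le_one_right (abs_nonneg _) (pow_le_one₀ hr0 hr1.le)

lemma one_sub_exp_neg_bounds {a : ℝ} (ha : 0 < a) :
    0 < 1 - exp (-a) ∧ 1 - exp (-a) ≤ a ∧ a ≤ (1 + a) * (1 - exp (-a)) := by
  have h1 := add_one_le_exp (-a)
  have h2 := add_one_le_exp a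
  have h3 : exp (-a) * exp a = 1 := by rw [← exp_add, neg_add_cancel, exp_zero]
  exact ⟨by linarith [exp_lt_one_iff.2 (neg_lt_zero.2 ha)], by linarith,
    by nlinarith [exp_pos (-a)]⟩

/-- The paper's `n ↦ (1/n) ∑_{k≥0} x_{k+1} 2^{-k/n}`, with both indices shifted to start at `0`. -/
def zetaMean (x : LInf) (n : ℕ) : ℝ :=
  ((n : ℝ) + 1)⁻¹ * ∑' k : ℕ, x k * (2 : ℝ) ^ (-(k : ℝ) / ((n : ℝ) + 1))

lemma log_two_mul_zetaMean_le (y : LInf) {L : ℝ} {N : ℕ} (hN : ∀ m ≥ N, cesaro y m ≤ L)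
    (n : ℕ) :
    log 2 * zetaMean y n ≤ L + log 2 / ((n : ℝ) + 1) *
      (|L| + log 2 / ((n : ℝ) + 1) * ∑ m ∈ range N, ((m : ℝ) + 1) * |cesaro y m - L|) := by
  set a := log 2 / ((n : ℝ) + 1)
  set K := ∑ m ∈ range N, ((m : ℝ) + 1) * |cesaro y m - L|
  set r := exp (-a)
  have ha : 0 < a := div_pos (log_pos one_lt_two) (by positivity)
  obtain ⟨hr_pos, hr_le, hr_ge⟩ : 0 < 1 - r ∧ 1 - r ≤ a ∧ a ≤ (1 + a) * (1 - r) :=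
    one_sub_exp_neg_bounds ha
  have hr0 : 0 ≤ r := (exp_pos _).le
  have hr1 : ‖r‖ < 1 := by rw [Real.norm_of_nonneg hr0]; linarith
  have hzeta : log 2 * zetaMean y n = a * ∑' k, y k * r ^ k := by
    have hpow (k : ℕ) : (2 : ℝ) ^ (-(k : ℝ) / ((n : ℝ) + 1)) = r ^ k := by
      rw [rpow_def_of_pos two_pos, ← exp_nat_mul]
      congr 1
      ring
    simp only [zetaMean, hpow]
    ring
  have hT := hasSum_succ_mul_cesaro_sub_mul_pow y L hr1
  set T := ∑' m : ℕ, ((m : ℝ) + 1) * (cesaro y m - L) * r ^ m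
  have hsum : ∑' k, y k * r ^ k = L / (1 - r) + (1 - r) * T := by
    rw [show T = _ from hT.tsum_eq]
    field_simp [hr_pos.ne']
    ring
  have hTK : T ≤ K := tsum_succ_mul_cesaro_sub_mul_pow_le y hN hr0 (by linarith)
  have hK : 0 ≤ K := sum_nonneg fun m _ => by positivity
  have hq : a * (L / (1 - r)) ≤ L + a * |L| := by
    have h1 : 1 ≤ a / (1 - r) := (one_le_div hr_pos).2 hr_le
    have h2 : a / (1 - r) ≤ 1 + a := (div_le_iff₀ hr_pos).2 hr_ge
    rw [show a * (L / (1 - r)) = L * (a / (1 - r)) by ring]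
    nlinarith [le_abs_self L, abs_nonneg L]
  have hrest : a * ((1 - r) * T) ≤ a * (a * K) := by
    refine mul_le_mul_of_nonneg_left ?_ ha.le
    exact (mul_le_mul_of_nonneg_left hTK hr_pos.le).trans (mul_le_mul_of_nonneg_right hr_le hK)
  rw [hzeta, hsum]
  linarith

lemma IsExtendedLimit.le_of_eventually_le {γ : LInf →L[ℝ] ℝ} (hγ : IsExtendedLimit γ)
    {w : LInf} {c : ℝ} (h : ∀ᶠ n in atTop, w n ≤ c) : γ w ≤ c := by
  have hmono : γ w ≤ γ (w ⊔ const ℕ c) := by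
    have := hγ.1 (w ⊔ const ℕ c - w) fun n => by simp
    rwa [map_sub, sub_nonneg] at this
  have hlim : γ (w ⊔ const ℕ c) = c :=
    hγ.2 _ _ (tendsto_const_nhds.congr' (h.mono fun n hn => by simp [hn]))
  exact hlim ▸ hmono

lemma IsExtendedLimit.le_of_eventually_le_of_tendsto {γ : LInf →L[ℝ] ℝ}
    (hγ : IsExtendedLimit γ) {w : LInf} {u : ℕ → ℝ} {c : ℝ} (hwu : ∀ᶠ n in atTop, w n ≤ u n)
    (hu : Tendsto u atTop (𝓝 c)) : γ w ≤ c := by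
  refine le_of_forall_gt_imp_ge_of_dense fun d hd => hγ.le_of_eventually_le ?_
  filter_upwards [hwu, hu.eventually (gt_mem_nhds hd)] with n h1 h2 using h1.trans h2.le

lemma IsExtendedLimit.log_two_mul_le_of_eventually_cesaro_le {γ : LInf →L[ℝ] ℝ}
    (hγ : IsExtendedLimit γ) {x Z : LInf} (hZ : ∀ n, Z n = zetaMean x n) {c : ℝ}
    (hc : ∀ᶠ m in atTop, cesaro x m ≤ c) : log 2 * γ Z ≤ c := by
  obtain ⟨N, hN⟩ := eventually_atTop.1 hc
  set K := ∑ m ∈ range N, ((m : ℝ) + 1) * |cesaro x m - c|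
  have ha : Tendsto (fun n : ℕ => log 2 / ((n : ℝ) + 1)) atTop (𝓝 0) :=
    tendsto_const_nhds.div_atTop (tendsto_atTop_add_const_right _ 1 tendsto_natCast_atTop_atTop)
  rw [← smul_eq_mul, ← map_smul]
  refine hγ.le_of_eventually_le_of_tendsto (.of_forall fun n => ?_)
    (u := fun n => c + log 2 / ((n : ℝ) + 1) * (|c| + log 2 / ((n : ℝ) + 1) * K)) ?_
  · simpa [hZ] using log_two_mul_zetaMean_le x hN n
  · simpa using tendsto_const_nhds.add (ha.mul (tendsto_const_nhds.add (ha.mul tendsto_const_nhds)))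

theorem zeta_banach_limit_between_cesaro_liminf_limsup
    (γ : LInf →L[ℝ] ℝ) (hγ : IsExtendedLimit γ)
    (Z : LInf → LInf)
    (hZ : ∀ (x : LInf) (n : ℕ),
      Z x n = (((n : ℝ) + 1))⁻¹ * ∑' k : ℕ, x k * (2 : ℝ) ^ (-(k : ℝ) / ((n : ℝ) + 1)))
    (B : LInf →L[ℝ] ℝ) (hB : ∀ x : LInf, B x = Real.log 2 * γ (Z x)) (x : LInf) :
    Filter.liminf (fun k => cesaro x k) Filter.atTop ≤ B x ∧
      B x ≤ Filter.limsup (fun k => cesaro x k) Filter.atTop := by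
  have hB_le (y : LInf) (c : ℝ) (hc : ∀ᶠ m in atTop, cesaro y m ≤ c) : B y ≤ c :=
    hB y ▸ hγ.log_two_mul_le_of_eventually_cesaro_le (hZ y) hc
  have hbdd (m : ℕ) := abs_le.1 (abs_cesaro_le x m)
  constructor
  · refine le_of_forall_lt_imp_le_of_dense fun c hc => ?_
    have hlt := eventually_lt_of_lt_liminf hc (isBoundedUnder_of ⟨-‖x‖, fun m => (hbdd m).1⟩)
    have := hB_le (-x) (-c) (hlt.mono fun m hm => by rw [cesaro_neg]; linarith)
    rw [map_neg] at this
    linarith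
  · refine le_of_forall_gt_imp_ge_of_dense fun c hc => hB_le x c ?_
    exact (eventually_lt_of_limsup_lt hc (isBoundedUnder_of ⟨‖x‖, fun m => (hbdd m).2⟩)).mono
      fun m hm => hm.le

end
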